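/- Let K be a traceless totally symmetric cubic form on R^3_1, expressed relative to an LVB {e,v,f} by coefficients b_1,...,b_7. If K is invariant under C_l = diag(l,1,1/l) for some l ≠ 0, ±1, then all coefficients except b_4 vanish. If K is invariant under C_{-1} = diag(-1,1,-1), then all coefficients except b_2, b_4, b_6 vanish. -/

import Mathlib

open Matrix

/-- Inner product of `ℝ³₁` in a light-vector basis `{e,v,f}`. -/
def ipL (x y : Fin 3 → ℝ) : ℝ := x 0 * y 2 + x 2 * y 0 + x 1 * y 1

/-- The light-vector basis `{e,v,f}` in coordinates. -/
def bas : Fin 3 → Fin 3 → ℝ := ![![1, 0, 0], ![0, 1, 0], ![0, 0, 1]]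

/-- The boost `C_l = diag(l,1,1/l)` with respect to the LVB. -/
noncomputable def Cl (l : ℝ) : Matrix (Fin 3) (Fin 3) ℝ :=
  !![l, 0, 0; 0, 1, 0; 0, 0, 1 / l]

lemma mv0 (l : ℝ) : (Cl l).mulVec (bas 0) = l • bas 0 := by
  funext i; fin_cases i <;> simp [Cl, bas, mulVec, dotProduct, Fin.sum_univ_three]

lemma mv1 (l : ℝ) : (Cl l).mulVec (bas 1) = bas 1 := by
  funext i; fin_cases i <;> simp [Cl, bas, mulVec, dotProduct, Fin.sum_univ_three]

lemma mv2 (l : ℝ) : (Cl l).mulVec (bas 2) = (1/l) • bas 2 := by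
  funext i; fin_cases i <;> simp [Cl, bas, mulVec, dotProduct, Fin.sum_univ_three]

lemma ipsl (s : ℝ) (w z : Fin 3 → ℝ) : ipL (s • w) z = s * ipL w z := by
  simp [ipL]; ring

lemma ipsr (s : ℝ) (w z : Fin 3 → ℝ) : ipL w (s • z) = s * ipL w z := by
  simp [ipL]; ring

lemma ip0 (w : Fin 3 → ℝ) : ipL w (bas 0) = w 2 := by simp [ipL, bas]
lemma ip1 (w : Fin 3 → ℝ) : ipL w (bas 1) = w 1 := by
  show w 0 * bas 1 2 + w 2 * bas 1 0 + w 1 * bas 1 1 = w 1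
  norm_num [bas]
  exact Or.inr rfl
lemma ip2 (w : Fin 3 → ℝ) : ipL w (bas 2) = w 0 := by
  have hb : bas 2 = ![(0:ℝ), 0, 1] := rfl
  simp [ipL, hb]

lemma key (a c : ℝ) (h : a * c = c) (ha : a ≠ 1) : c = 0 := by
  have h2 : (a - 1) * c = 0 := by linear_combination h
  rcases mul_eq_zero.mp h2 with h' | h'
  · exact absurd (by linarith) ha
  · exact h'

/-- Let `K` be a traceless totally symmetric cubic form on `ℝ³₁` with LVB
coefficients `b₁,…,b₇` (so `K(e,e) = (b₁,b₂,b₃)`, `b₄ = (K(e,v))_e`,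
`b₅ = (K(e,f))_e`, `b₆ = (K(f,f))_v`, `b₇ = (K(f,f))_e`).
If `K` is invariant under `C_l` for some `l ≠ 0, ±1` then all coefficients
except `b₄` vanish; if `K` is invariant under `C_{-1} = diag(-1,1,-1)` then all
coefficients except `b₂, b₄, b₆` vanish. -/
theorem stmt8 (K : (Fin 3 → ℝ) →ₗ[ℝ] (Fin 3 → ℝ) →ₗ[ℝ] (Fin 3 → ℝ))
    (hsymm : ∀ X Y, K X Y = K Y X)
    (htot : ∀ X Y Z, ipL (K X Y) Z = ipL (K X Z) Y)
    (htr : ∀ X, ∑ i, K X (bas i) i = 0) :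
    (∀ l : ℝ, l ≠ 0 → l ≠ 1 → l ≠ -1 →
      (∀ X Y Z, ipL (K ((Cl l).mulVec X) ((Cl l).mulVec Y)) ((Cl l).mulVec Z)
        = ipL (K X Y) Z) →
      (K (bas 0) (bas 0) = 0 ∧ K (bas 0) (bas 2) 0 = 0 ∧
        K (bas 2) (bas 2) 0 = 0 ∧ K (bas 2) (bas 2) 1 = 0)) ∧
    ((∀ X Y Z, ipL (K ((Cl (-1)).mulVec X) ((Cl (-1)).mulVec Y))
        ((Cl (-1)).mulVec Z) = ipL (K X Y) Z) →
      (K (bas 0) (bas 0) 0 = 0 ∧ K (bas 0) (bas 0) 2 = 0 ∧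
        K (bas 0) (bas 2) 0 = 0 ∧ K (bas 2) (bas 2) 0 = 0)) := by
  constructor
  · intro l hl0 hl1 hlm1 hl
    -- nonvanishing facts
    have hcube : l * l * l ≠ 1 := by
      intro h
      have h2 : (l - 1) * (l * l + l + 1) = 0 := by linear_combination h
      have hpos : 0 < l * l + l + 1 := by nlinarith [sq_nonneg (2 * l + 1)]
      rcases mul_eq_zero.mp h2 with h' | h'
      · exact hl1 (by linarith)
      · linarith
    have hsq : l * l ≠ 1 := by
      intro h
      have h2 : (l - 1) * (l + 1) = 0 := by linear_combination h
      rcases mul_eq_zero.mp h2 with h' | h'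
      · exact hl1 (by linarith)
      · exact hlm1 (by linarith)
    have hinv : (1 : ℝ) / l ≠ 1 := by
      intro h; apply hl1; field_simp at h; linarith
    have hinvsq : (1 : ℝ) / l * (1 / l) ≠ 1 := by
      intro h; apply hsq; field_simp at h; linarith
    have hinvcube : (1 : ℝ) / l * (1 / l) * (1 / l) ≠ 1 := by
      intro h; apply hcube; field_simp at h; linarith
    have h000 := hl (bas 0) (bas 0) (bas 0)
    have h001 := hl (bas 0) (bas 0) (bas 1)
    have h002 := hl (bas 0) (bas 0) (bas 2)
    have h022 := hl (bas 0) (bas 2) (bas 2)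
    have h222 := hl (bas 2) (bas 2) (bas 2)
    have h221 := hl (bas 2) (bas 2) (bas 1)
    rw [mv0] at h000 h001 h002 h022
    rw [mv1] at h001 h221
    rw [mv2] at h002 h022 h222 h221
    simp only [LinearMap.map_smul, LinearMap.smul_apply, ipsl, ipsr,
      ip0, ip1, ip2, Pi.smul_apply, smul_eq_mul] at h000 h001 h002 h022 h222 h221
    have h002' : l * (K (bas 0)) (bas 0) 0 = (K (bas 0)) (bas 0) 0 := by
      calc l * (K (bas 0)) (bas 0) 0
          = 1 / l * (l * (l * (K (bas 0)) (bas 0) 0)) := by field_simp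
        _ = (K (bas 0)) (bas 0) 0 := h002
    have h022' : 1 / l * (K (bas 0)) (bas 2) 0 = (K (bas 0)) (bas 2) 0 := by
      calc 1 / l * (K (bas 0)) (bas 2) 0
          = 1 / l * (l * (1 / l * (K (bas 0)) (bas 2) 0)) := by field_simp
        _ = (K (bas 0)) (bas 2) 0 := h022
    refine ⟨?_, ?_, ?_, ?_⟩
    · funext i
      fin_cases i
      · exact key l _ h002' hl1
      · show (K (bas 0)) (bas 0) 1 = 0
        exact key (l * l) _ (by linear_combination h001) hsq
      · show (K (bas 0)) (bas 0) 2 = 0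
        exact key (l * l * l) _ (by linear_combination h000) hcube
    · exact key (1 / l) _ h022' hinv
    · exact key (1 / l * (1 / l) * (1 / l)) _ (by linear_combination h222) hinvcube
    · exact key (1 / l * (1 / l)) _ (by linear_combination h221) hinvsq
  · intro hl
    have h000 := hl (bas 0) (bas 0) (bas 2)
    have h002 := hl (bas 0) (bas 0) (bas 0)
    have h022 := hl (bas 0) (bas 2) (bas 2)
    have h222 := hl (bas 2) (bas 2) (bas 2)
    rw [mv0] at h000 h002 h022
    rw [mv2] at h000 h022 h222
    simp only [LinearMap.map_smul, LinearMap.smul_apply, ipsl, ipsr,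
      ip0, ip1, ip2, Pi.smul_apply, smul_eq_mul] at h000 h002 h022 h222
    norm_num at h000 h002 h022 h222
    exact ⟨by linarith, by linarith, by linarith, by linarith⟩
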